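/- arXiv:1108.1727 — 5 statements merged into one kernel-verified Lean document; each statement's English description precedes it below -/
import Mathlib

section
/- Let Γ ⊆ ℕ² be a finite set that contains a point of the form (a,0) and a point of the form (0,b) (for some a,b ∈ ℕ), and let I ⊆ ℂ[z₁,z₂] be the ideal generated by the monomials z₁^{γ₁}z₂^{γ₂} with (γ₁,γ₂) ∈ Γ. Then there exists a constant C > 0 such that for every integer k ≥ 1, | dim_ℂ( ℂ[z₁,z₂]/I^k ) − |Δ(Γ)|·k² | ≤ C·k; that is, dim_ℂ( ℂ[z₁,z₂]/I^k ) = |Δ(Γ)|·k² + O(k). -/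
open Pointwise MeasureTheory

noncomputable section

/-- The closed first quadrant in `ℝ²`. -/
def quadrant : Set (ℝ × ℝ) := {p | 0 ≤ p.1 ∧ 0 ≤ p.2}

/-- The embedding of `ℕ²` into `ℝ²`. -/
def toR2 (γ : ℕ × ℕ) : ℝ × ℝ := ((γ.1 : ℝ), (γ.2 : ℝ))

/-- The Newton polygon `Δ(Γ) = ℝ≥0² \ conv(ℝ≥0² + Γ)` of a finite set `Γ ⊆ ℕ²`. -/
def newtonPolygon (Γ : Finset (ℕ × ℕ)) : Set (ℝ × ℝ) :=
  quadrant \ closure (convexHull ℝ (quadrant + toR2 '' (Γ : Set (ℕ × ℕ))))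

/-- The area `|Δ(Γ)|` of the Newton polygon. -/
def newtonArea (Γ : Finset (ℕ × ℕ)) : ℝ := (volume (newtonPolygon Γ)).toReal

/-- The monomial ideal of `ℂ[z₁,z₂]` generated by the monomials with exponents in `Γ`. -/
def monomialIdeal (Γ : Finset (ℕ × ℕ)) : Ideal (MvPolynomial (Fin 2) ℂ) :=
  Ideal.span ((fun γ : ℕ × ℕ => MvPolynomial.X 0 ^ γ.1 * MvPolynomial.X 1 ^ γ.2) ''
    (Γ : Set (ℕ × ℕ)))


/-!
The monomials outside `I^k` form a basis of `ℂ[z₁,z₂]/I^k`, so its dimension is the number of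
lattice points `m ∈ ℕ²` lying above no point of the `k`-fold sumset `Γ + ⋯ + Γ`. Every point of
`k • conv Γ`, shifted by the fixed vector `∑ γ ∈ Γ, γ`, lies above a point of that sumset (round the
convex weights up), so up to this bounded shift these lattice points are those of the dilate
`k • Δ(Γ) = ℝ≥0² \ (ℝ≥0² + k • conv Γ)`, of area `k² |Δ(Γ)|`. Comparing the unit squares at the
lattice points with `k • Δ(Γ)` in both directions loses only the squares in two strips of bounded
width along the axes, `O(k)` of them.
-/

open MvPolynomial

namespace MvPolynomial

variable {σ K : Type*} [Field K]

theorem restrictScalars_span_monomial (S : Set (σ →₀ ℕ)) :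
    (Ideal.span ((monomial · (1 : K)) '' S)).restrictScalars K
      = restrictSupport K (upperClosure S : Set (σ →₀ ℕ)) := by
  ext x
  simp [mem_ideal_span_monomial_image, mem_restrictSupport_iff, Set.subset_def]

theorem isCompl_restrictSupport_compl (s : Set (σ →₀ ℕ)) :
    IsCompl (restrictSupport K s) (restrictSupport K sᶜ) :=
  (Submodule.orderIsoMapComap (AddMonoidAlgebra.coeffLinearEquiv K)).symm.isCompl
    ⟨Finsupp.disjoint_supported_supported isCompl_compl.disjoint,
      Finsupp.codisjoint_supported_supported isCompl_compl.codisjoint⟩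

theorem finrank_quotient_span_monomial (S : Set (σ →₀ ℕ)) :
    Module.finrank K (MvPolynomial σ K ⧸ Ideal.span ((monomial · (1 : K)) '' S))
      = Nat.card ↥(upperClosure S : Set (σ →₀ ℕ))ᶜ := by
  set I := Ideal.span ((monomial · (1 : K)) '' S)
  calc Module.finrank K (MvPolynomial σ K ⧸ I)
      = Module.finrank K (MvPolynomial σ K ⧸ I.restrictScalars K) :=
        (Submodule.Quotient.restrictScalarsEquiv K I).finrank_eq.symm
    _ = Module.finrank K (restrictSupport K (upperClosure S : Set (σ →₀ ℕ))ᶜ) := by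
        rw [restrictScalars_span_monomial]
        exact (Submodule.quotientEquivOfIsCompl _ _ (isCompl_restrictSupport_compl _)).finrank_eq
    _ = _ := Module.finrank_eq_nat_card_basis (basisRestrictSupport K _)

end MvPolynomial

def prodOrderIsoFinsuppFinTwo : ℕ × ℕ ≃o (Fin 2 →₀ ℕ) where
  toFun γ := Finsupp.single 0 γ.1 + Finsupp.single 1 γ.2
  invFun d := (d 0, d 1)
  left_inv γ := by simp
  right_inv d := by ext i; fin_cases i <;> simp
  map_rel_iff' := by simp [Finsupp.le_def, Fin.forall_fin_two, Prod.le_def]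

theorem monomial_prodOrderIsoFinsuppFinTwo (γ : ℕ × ℕ) :
    monomial (prodOrderIsoFinsuppFinTwo γ) (1 : ℂ) = X 0 ^ γ.1 * X 1 ^ γ.2 := by
  simp [prodOrderIsoFinsuppFinTwo, X_pow_eq_monomial, monomial_mul]

-- `k • (Γ : Set (ℕ × ℕ))` is the pointwise `k`-fold sumset `Γ + ⋯ + Γ`, not the dilate of `Γ`.
theorem monomialIdeal_pow (Γ : Finset (ℕ × ℕ)) (k : ℕ) :
    monomialIdeal Γ ^ k
      = Ideal.span ((fun γ : ℕ × ℕ => X 0 ^ γ.1 * X 1 ^ γ.2) '' (k • (Γ : Set (ℕ × ℕ)))) := by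
  set f := fun γ : ℕ × ℕ => (X 0 ^ γ.1 * X 1 ^ γ.2 : MvPolynomial (Fin 2) ℂ)
  have hf (A B : Set (ℕ × ℕ)) : f '' (A + B) = f '' A * f '' B := by
    simp_rw [← Set.image2_add, ← Set.image2_mul]
    exact Set.image_image2_distrib fun a b => by simp only [f, Prod.fst_add, Prod.snd_add]; ring
  induction k with
  | zero => simp [f]
  | succ k ih => rw [pow_succ, ih, succ_nsmul, hf, monomialIdeal, Ideal.span_mul_span']

def standardExponents (Γ : Finset (ℕ × ℕ)) (k : ℕ) : Set (ℕ × ℕ) :=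
  (upperClosure (k • (Γ : Set (ℕ × ℕ))) : Set (ℕ × ℕ))ᶜ

theorem finrank_quotient_monomialIdeal_pow (Γ : Finset (ℕ × ℕ)) (k : ℕ) :
    Module.finrank ℂ (MvPolynomial (Fin 2) ℂ ⧸ monomialIdeal Γ ^ k)
      = (standardExponents Γ k).ncard := by
  have hf : (fun γ : ℕ × ℕ => (X 0 ^ γ.1 * X 1 ^ γ.2 : MvPolynomial (Fin 2) ℂ))
      = (monomial · 1) ∘ prodOrderIsoFinsuppFinTwo :=
    funext fun γ => (monomial_prodOrderIsoFinsuppFinTwo γ).symm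
  rw [monomialIdeal_pow, hf, Set.image_comp, finrank_quotient_span_monomial, upperClosure_image,
    UpperSet.coe_map, ← Set.image_compl_eq prodOrderIsoFinsuppFinTwo.bijective,
    Nat.card_image_of_injective prodOrderIsoFinsuppFinTwo.injective, Nat.card_coe_set_eq,
    standardExponents]

theorem Set.sum_nsmul_mem_sum_nsmul {M ι : Type*} [AddCommMonoid M] {A : Set M} (t : Finset ι)
    (n : ι → ℕ) {g : ι → M} (hg : ∀ i ∈ t, g i ∈ A) :
    ∑ i ∈ t, n i • g i ∈ (∑ i ∈ t, n i) • A := by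
  rw [← Finset.sum_nsmul_assoc]
  exact Set.finsetSum_mem_finsetSum _ _ _ fun i hi => Set.nsmul_mem_nsmul (hg i hi)

theorem Set.exists_le_of_mem_nsmul {M : Type*} [AddCommMonoid M] [PartialOrder M]
    [CanonicallyOrderedAdd M] {A : Set M} {k N : ℕ} (hkN : k ≤ N) {s : M} (hs : s ∈ N • A) :
    ∃ s' ∈ k • A, s' ≤ s := by
  rw [← Nat.add_sub_cancel' hkN, add_nsmul] at hs
  obtain ⟨s', hs', t, -, rfl⟩ := hs
  exact ⟨s', hs', le_self_add⟩

section Exponents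

variable {Γ : Finset (ℕ × ℕ)} {a b : ℕ}

theorem standardExponents_subset (ha : (a, 0) ∈ Γ) (hb : (0, b) ∈ Γ) (k : ℕ) :
    standardExponents Γ k ⊆ Set.Iio (k * a) ×ˢ Set.Iio (k * b) := by
  intro m hm
  rw [Set.mem_prod, Set.mem_Iio, Set.mem_Iio]
  refine ⟨lt_of_not_ge fun h => hm ⟨k • (a, 0), Set.nsmul_mem_nsmul ha, ?_⟩,
    lt_of_not_ge fun h => hm ⟨k • (0, b), Set.nsmul_mem_nsmul hb, ?_⟩⟩ <;>
  simpa [Prod.le_def] using h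

theorem standardExponents_finite (ha : (a, 0) ∈ Γ) (hb : (0, b) ∈ Γ) (k : ℕ) :
    (standardExponents Γ k).Finite :=
  ((Set.finite_Iio _).prod (Set.finite_Iio _)).subset (standardExponents_subset ha hb k)

end Exponents

theorem quadrant_eq_Ici : quadrant = Set.Ici 0 := by
  ext p; simp [quadrant, Prod.le_def]

theorem mem_quadrant {p : ℝ × ℝ} : p ∈ quadrant ↔ 0 ≤ p := by
  rw [quadrant_eq_Ici, Set.mem_Ici]

theorem smul_quadrant {r : ℝ} (hr : 0 < r) : r • quadrant = quadrant := by
  rw [quadrant_eq_Ici, ← Set.image_smul]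
  simpa using (OrderIso.smulRight (β := ℝ × ℝ) hr).image_Ici 0

theorem closure_convexHull_quadrant_add {S : Set (ℝ × ℝ)} (hS : S.Finite) :
    closure (convexHull ℝ (quadrant + S)) = quadrant + convexHull ℝ S := by
  rw [convexHull_add, quadrant_eq_Ici, (convex_Ici 0).convexHull_eq, add_comm]
  exact (isClosed_Ici.add_left_of_isCompact (hS.isCompact_convexHull (𝕜 := ℝ))).closure_eq

def toR2Hom : ℕ × ℕ →+ ℝ × ℝ := (Nat.castAddMonoidHom ℝ).prodMap (Nat.castAddMonoidHom ℝ)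

theorem coe_toR2Hom : ⇑toR2Hom = toR2 := rfl

theorem toR2_le_toR2 {x y : ℕ × ℕ} : toR2 x ≤ toR2 y ↔ x ≤ y := by
  simp [toR2, Prod.le_def]

theorem toR2_injective : Function.Injective toR2 := fun x y h => by
  simpa [toR2, Prod.ext_iff] using h

theorem zero_le_toR2 (x : ℕ × ℕ) : 0 ≤ toR2 x := by
  simp [toR2, Prod.le_def]

theorem nsmul_subset_smul_convexHull {E : Type*} [AddCommGroup E] [Module ℝ E] {B : Set E}
    (hB : B.Nonempty) (n : ℕ) : n • B ⊆ (n : ℝ) • convexHull ℝ B := by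
  induction n with
  | zero => simp [Set.zero_smul_set hB.convexHull]
  | succ n ih =>
    rw [succ_nsmul, Nat.cast_succ, (convex_convexHull ℝ B).add_smul n.cast_nonneg zero_le_one,
      one_smul]
    exact Set.add_subset_add ih (subset_convexHull ℝ B)

theorem exists_mem_nsmul_toR2_le {Γ : Finset (ℕ × ℕ)} {y : ℝ × ℝ}
    (hy : y ∈ convexHull ℝ (toR2 '' Γ)) (k : ℕ) :
    ∃ s ∈ k • (Γ : Set (ℕ × ℕ)), toR2 s ≤ (k : ℝ) • y + toR2 (∑ γ ∈ Γ, γ) := by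
  classical
  rw [← Finset.coe_image, Finset.mem_convexHull'] at hy
  obtain ⟨w, hw0, hw1, rfl⟩ := hy
  simp only [Finset.sum_image fun x _ y _ h => toR2_injective h] at hw1 ⊢
  -- Rounding the weights `k * w γ` up overshoots `k • y` by at most `∑ γ ∈ Γ, toR2 γ`.
  set n : ℕ × ℕ → ℕ := fun γ => ⌈k * w (toR2 γ)⌉₊
  have hkN : k ≤ ∑ γ ∈ Γ, n γ := by
    have : (k : ℝ) ≤ ∑ γ ∈ Γ, (n γ : ℝ) := calc
      (k : ℝ) = ∑ γ ∈ Γ, k * w (toR2 γ) := by rw [← Finset.mul_sum, hw1, mul_one]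
      _ ≤ ∑ γ ∈ Γ, (n γ : ℝ) := Finset.sum_le_sum fun γ _ => Nat.le_ceil _
    exact_mod_cast this
  obtain ⟨s, hs, hle⟩ := Set.exists_le_of_mem_nsmul hkN
    (Set.sum_nsmul_mem_sum_nsmul (A := (Γ : Set (ℕ × ℕ))) Γ n fun γ hγ => hγ)
  refine ⟨s, hs, (toR2_le_toR2.mpr hle).trans ?_⟩
  rw [← coe_toR2Hom, map_sum, map_sum, Finset.smul_sum, ← Finset.sum_add_distrib]
  refine Finset.sum_le_sum fun γ hγ => ?_
  rw [map_nsmul, coe_toR2Hom, ← Nat.cast_smul_eq_nsmul ℝ, smul_smul]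
  have := hw0 _ (Finset.mem_image_of_mem _ hγ)
  calc (n γ : ℝ) • toR2 γ ≤ (k * w (toR2 γ) + 1) • toR2 γ :=
        smul_le_smul_of_nonneg_right (Nat.ceil_lt_add_one (by positivity)).le (zero_le_toR2 γ)
    _ = _ := by rw [add_smul, one_smul]

def newtonRegion (Γ : Finset (ℕ × ℕ)) (r : ℝ) : Set (ℝ × ℝ) :=
  quadrant + r • convexHull ℝ (toR2 '' (Γ : Set (ℕ × ℕ)))

theorem isUpperSet_newtonRegion (Γ : Finset (ℕ × ℕ)) (r : ℝ) : IsUpperSet (newtonRegion Γ r) := by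
  rw [newtonRegion, quadrant_eq_Ici]
  exact (isUpperSet_Ici 0).add_right

theorem smul_newtonPolygon (Γ : Finset (ℕ × ℕ)) {r : ℝ} (hr : 0 < r) :
    r • newtonPolygon Γ = quadrant \ newtonRegion Γ r := by
  rw [newtonPolygon, closure_convexHull_quadrant_add (Γ.finite_toSet.image toR2),
    Set.smul_set_sdiff₀ hr.ne', smul_add, smul_quadrant hr, newtonRegion]

section NewtonRegion

variable {Γ : Finset (ℕ × ℕ)}

theorem toR2_mem_newtonRegion (hΓ : Γ.Nonempty) {k : ℕ} {m : ℕ × ℕ}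
    (hm : m ∈ upperClosure (k • (Γ : Set (ℕ × ℕ)))) : toR2 m ∈ newtonRegion Γ k := by
  obtain ⟨s, hs, hsm⟩ := hm
  have hs' : toR2 s ∈ (k : ℝ) • convexHull ℝ (toR2 '' (Γ : Set (ℕ × ℕ))) := by
    refine nsmul_subset_smul_convexHull ((Finset.coe_nonempty.mpr hΓ).image toR2) k ?_
    rw [← coe_toR2Hom, ← Set.image_nsmul]
    exact Set.mem_image_of_mem _ hs
  exact isUpperSet_newtonRegion Γ k (toR2_le_toR2.mpr hsm)
    ⟨0, mem_quadrant.mpr le_rfl, _, hs', zero_add _⟩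

theorem mem_upperClosure_of_toR2_sub_mem_newtonRegion {k : ℕ} {m : ℕ × ℕ}
    (h : toR2 m - toR2 (∑ γ ∈ Γ, γ) ∈ newtonRegion Γ k) :
    m ∈ upperClosure (k • (Γ : Set (ℕ × ℕ))) := by
  obtain ⟨q, hq, -, ⟨y, hy, rfl⟩, hqy⟩ := h
  obtain ⟨s, hs, hsle⟩ := exists_mem_nsmul_toR2_le hy k
  refine ⟨s, hs, toR2_le_toR2.mp (hsle.trans ?_)⟩
  rw [← le_sub_iff_add_le, ← hqy]
  exact le_add_of_nonneg_left (mem_quadrant.mp hq)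

end NewtonRegion

def unitSquare (m : ℕ × ℕ) : Set (ℝ × ℝ) :=
  Set.Ico (m.1 : ℝ) (m.1 + 1) ×ˢ Set.Ico (m.2 : ℝ) (m.2 + 1)

theorem volume_unitSquare (m : ℕ × ℕ) : volume (unitSquare m) = 1 := by
  simp [unitSquare, Measure.volume_eq_prod, Measure.prod_prod, Real.volume_Ico]

theorem pairwise_disjoint_unitSquare : Pairwise (Function.onFun Disjoint unitSquare) := by
  have hIco {a b : ℕ} (h : a ≠ b) :
      Disjoint (Set.Ico (a : ℝ) (a + 1)) (Set.Ico (b : ℝ) (b + 1)) := by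
    simpa using Set.pairwise_disjoint_Ico_intCast ℝ (Int.natCast_inj.not.mpr h)
  intro m m' h
  rw [Function.onFun, unitSquare, unitSquare, Set.disjoint_prod]
  by_cases h1 : m.1 = m'.1
  · exact Or.inr (hIco fun h2 => h (Prod.ext h1 h2))
  · exact Or.inl (hIco h1)

theorem mem_unitSquare_floor {p : ℝ × ℝ} (hp : 0 ≤ p) : p ∈ unitSquare (⌊p.1⌋₊, ⌊p.2⌋₊) :=
  ⟨⟨Nat.floor_le hp.1, Nat.lt_floor_add_one _⟩, ⟨Nat.floor_le hp.2, Nat.lt_floor_add_one _⟩⟩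

theorem toR2_le_of_mem_unitSquare {m : ℕ × ℕ} {p : ℝ × ℝ} (hp : p ∈ unitSquare m) :
    toR2 m ≤ p :=
  ⟨hp.1.1, hp.2.1⟩

theorem measureReal_le_card_of_subset_biUnion_unitSquare {D : Set (ℝ × ℝ)} (F : Finset (ℕ × ℕ))
    (hD : D ⊆ ⋃ m ∈ F, unitSquare m) : volume.real D ≤ F.card := by
  refine (measureReal_mono hD (measure_biUnion_finset_le F _ |>.trans_lt ?_).ne).trans ?_
  · simp [volume_unitSquare]
  · refine (measureReal_biUnion_finset_le F _).trans ?_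
    simp [Measure.real, volume_unitSquare]

theorem card_le_measureReal_of_unitSquare_subset {D : Set (ℝ × ℝ)} (hD : volume D ≠ ⊤)
    (F : Finset (ℕ × ℕ)) (h : ∀ m ∈ F, unitSquare m ⊆ D) : (F.card : ℝ) ≤ volume.real D := by
  calc (F.card : ℝ) = volume.real (⋃ m ∈ F, unitSquare m) := by
        rw [measureReal_biUnion_finset (fun m _ m' _ hne => pairwise_disjoint_unitSquare hne)
          (fun m _ => measurableSet_Ico.prod measurableSet_Ico) (by simp [volume_unitSquare])]
        simp [Measure.real, volume_unitSquare]
    _ ≤ volume.real D := measureReal_mono (Set.iUnion₂_subset h) hD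

theorem volume_Ico_prod_Ico (x y : ℝ) :
    volume (Set.Ico 0 x ×ˢ Set.Ico 0 y) = ENNReal.ofReal x * ENNReal.ofReal y := by
  simp [Measure.volume_eq_prod, Measure.prod_prod, Real.volume_Ico]

theorem measureReal_Ico_prod_Ico {x y : ℝ} (hx : 0 ≤ x) (hy : 0 ≤ y) :
    volume.real (Set.Ico 0 x ×ˢ Set.Ico 0 y) = x * y := by
  rw [Measure.real, volume_Ico_prod_Ico, ENNReal.toReal_mul, ENNReal.toReal_ofReal hx,
    ENNReal.toReal_ofReal hy]

theorem measureReal_smul_newtonPolygon (Γ : Finset (ℕ × ℕ)) (r : ℝ) :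
    volume.real (r • newtonPolygon Γ) = newtonArea Γ * r ^ 2 := by
  have h2 : Module.finrank ℝ (ℝ × ℝ) = 2 := by simp
  rw [Measure.real, Measure.addHaar_smul, ENNReal.toReal_mul, ENNReal.toReal_ofReal (abs_nonneg _),
    h2, abs_of_nonneg (sq_nonneg r), mul_comm]
  rfl

section Bounds

variable {Γ : Finset (ℕ × ℕ)} {a b : ℕ}

theorem newtonPolygon_subset (ha : (a, 0) ∈ Γ) (hb : (0, b) ∈ Γ) :
    newtonPolygon Γ ⊆ Set.Ico 0 (a : ℝ) ×ˢ Set.Ico 0 (b : ℝ) := by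
  intro p hp
  rw [← one_smul ℝ (newtonPolygon Γ), smul_newtonPolygon Γ one_pos] at hp
  obtain ⟨hp0, hpR⟩ := hp
  rw [mem_quadrant] at hp0
  have hnot {γ : ℕ × ℕ} (hγ : γ ∈ Γ) : ¬ toR2 γ ≤ p := fun hle =>
    hpR <| isUpperSet_newtonRegion Γ 1 hle <| by
      simpa using toR2_mem_newtonRegion ⟨γ, hγ⟩ (k := 1) (subset_upperClosure (by simpa using hγ))
  refine ⟨⟨hp0.1, lt_of_not_ge fun h => hnot ha ⟨h, ?_⟩⟩,
    ⟨hp0.2, lt_of_not_ge fun h => hnot hb ⟨?_, h⟩⟩⟩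
  · simpa [toR2] using hp0.2
  · simpa [toR2] using hp0.1

theorem volume_smul_newtonPolygon_ne_top (ha : (a, 0) ∈ Γ) (hb : (0, b) ∈ Γ) (r : ℝ) :
    volume (r • newtonPolygon Γ) ≠ ⊤ := by
  rw [Measure.addHaar_smul]
  refine ENNReal.mul_ne_top ENNReal.ofReal_ne_top
    (ne_top_of_le_ne_top ?_ (measure_mono (newtonPolygon_subset ha hb)))
  simp [volume_Ico_prod_Ico, ENNReal.mul_ne_top]

theorem newtonArea_mul_sq_le_ncard (ha : (a, 0) ∈ Γ) (hb : (0, b) ∈ Γ) {k : ℕ} (hk : 0 < k) :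
    newtonArea Γ * (k : ℝ) ^ 2 ≤ (standardExponents Γ k).ncard := by
  have hfin := standardExponents_finite ha hb k
  rw [← measureReal_smul_newtonPolygon, Set.ncard_eq_toFinset_card _ hfin]
  refine measureReal_le_card_of_subset_biUnion_unitSquare _ fun p hp => ?_
  rw [smul_newtonPolygon Γ (by positivity)] at hp
  obtain ⟨hp0, hpR⟩ := hp
  rw [mem_quadrant] at hp0
  refine Set.mem_biUnion (hfin.mem_toFinset.mpr fun hm => hpR ?_) (mem_unitSquare_floor hp0)
  exact isUpperSet_newtonRegion Γ k (toR2_le_of_mem_unitSquare (mem_unitSquare_floor hp0))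
    (toR2_mem_newtonRegion ⟨_, ha⟩ hm)

theorem unitSquare_subset_vadd_smul_newtonPolygon_union (ha : (a, 0) ∈ Γ) (hb : (0, b) ∈ Γ)
    {σ : ℝ × ℝ} (hσ : toR2 (∑ γ ∈ Γ, γ) ≤ σ) {k : ℕ} (hk : 0 < k) {m : ℕ × ℕ}
    (hm : m ∈ standardExponents Γ k) :
    unitSquare m ⊆ ((σ + (1, 1)) +ᵥ (k : ℝ) • newtonPolygon Γ) ∪
      (Set.Ico 0 (σ.1 + 1) ×ˢ Set.Ico 0 (k * b : ℝ) ∪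
        Set.Ico 0 (k * a : ℝ) ×ˢ Set.Ico 0 (σ.2 + 1)) := by
  intro p hp
  obtain ⟨hma, hmb⟩ := standardExponents_subset ha hb k hm
  have hma' : (m.1 : ℝ) + 1 ≤ k * a := by exact_mod_cast hma
  have hmb' : (m.2 : ℝ) + 1 ≤ k * b := by exact_mod_cast hmb
  obtain ⟨⟨hp₁, hp₁'⟩, ⟨hp₂, hp₂'⟩⟩ := hp
  have hm₁ := m.1.cast_nonneg (α := ℝ)
  have hm₂ := m.2.cast_nonneg (α := ℝ)
  by_cases h₁ : p.1 < σ.1 + 1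
  · exact Or.inr (Or.inl ⟨⟨by linarith, h₁⟩, ⟨by linarith, by linarith⟩⟩)
  by_cases h₂ : p.2 < σ.2 + 1
  · exact Or.inr (Or.inr ⟨⟨by linarith, by linarith⟩, ⟨by linarith, h₂⟩⟩)
  rw [not_lt] at h₁ h₂
  refine Or.inl ⟨p - (σ + (1, 1)), ?_, add_sub_cancel _ _⟩
  rw [smul_newtonPolygon Γ (by positivity)]
  refine ⟨mem_quadrant.mpr ⟨by simp; linarith, by simp; linarith⟩, fun hR => hm ?_⟩
  refine mem_upperClosure_of_toR2_sub_mem_newtonRegion (isUpperSet_newtonRegion Γ k ?_ hR)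
  obtain ⟨hσ₁, hσ₂⟩ := hσ
  exact ⟨by simp only [Prod.fst_sub, Prod.fst_add, toR2] at hσ₁ ⊢; linarith,
    by simp only [Prod.snd_sub, Prod.snd_add, toR2] at hσ₂ ⊢; linarith⟩

theorem exists_ncard_le_newtonArea_mul_sq_add (ha : (a, 0) ∈ Γ) (hb : (0, b) ∈ Γ) :
    ∃ C : ℝ, ∀ k : ℕ, 0 < k →
      ((standardExponents Γ k).ncard : ℝ) ≤ newtonArea Γ * (k : ℝ) ^ 2 + C * k := by
  set σ := toR2 (∑ γ ∈ Γ, γ)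
  obtain ⟨hσ₁, hσ₂⟩ : 0 ≤ σ.1 ∧ 0 ≤ σ.2 := zero_le_toR2 _
  refine ⟨(σ.1 + 1) * b + a * (σ.2 + 1), fun k hk => ?_⟩
  set S := Set.Ico 0 (σ.1 + 1) ×ˢ Set.Ico 0 (k * b : ℝ) ∪
    Set.Ico 0 (k * a : ℝ) ×ˢ Set.Ico 0 (σ.2 + 1)
  have hfin := standardExponents_finite ha hb k
  have hS : volume.real S ≤ (σ.1 + 1) * (k * b) + (k * a) * (σ.2 + 1) := by
    refine (measureReal_union_le _ _).trans_eq ?_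
    rw [measureReal_Ico_prod_Ico (by linarith) (by positivity),
      measureReal_Ico_prod_Ico (by positivity) (by linarith)]
  calc ((standardExponents Γ k).ncard : ℝ) = hfin.toFinset.card := by
        rw [Set.ncard_eq_toFinset_card _ hfin]
    _ ≤ volume.real (((σ + (1, 1)) +ᵥ (k : ℝ) • newtonPolygon Γ) ∪ S) := by
        refine card_le_measureReal_of_unitSquare_subset ?_ _ fun m hm =>
          unitSquare_subset_vadd_smul_newtonPolygon_union ha hb le_rfl hk (hfin.mem_toFinset.mp hm)
        refine measure_union_ne_top ?_ ?_
        · rw [measure_vadd]; exact volume_smul_newtonPolygon_ne_top ha hb _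
        · exact measure_union_ne_top (by simp [volume_Ico_prod_Ico, ENNReal.mul_ne_top])
            (by simp [volume_Ico_prod_Ico, ENNReal.mul_ne_top])
    _ ≤ volume.real ((k : ℝ) • newtonPolygon Γ) + volume.real S := by
        refine (measureReal_union_le _ _).trans_eq ?_
        simp [Measure.real, measure_vadd]
    _ ≤ newtonArea Γ * (k : ℝ) ^ 2 + ((σ.1 + 1) * b + a * (σ.2 + 1)) * k := by
        rw [measureReal_smul_newtonPolygon]; linarith

end Bounds

/-- `dim_ℂ (ℂ[z₁,z₂]/I^k) = |Δ(I)|·k² + O(k)` for a monomial ideal `I` whose exponent set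
meets both coordinate axes. -/
theorem newton_polygon_dimension_asymptotics
    (Γ : Finset (ℕ × ℕ)) (a b : ℕ) (ha : (a, 0) ∈ Γ) (hb : (0, b) ∈ Γ) :
    ∃ C : ℝ, 0 < C ∧ ∀ k : ℕ, 1 ≤ k →
      |(Module.finrank ℂ (MvPolynomial (Fin 2) ℂ ⧸ (monomialIdeal Γ) ^ k) : ℝ)
        - newtonArea Γ * (k : ℝ) ^ 2| ≤ C * (k : ℝ) := by
  obtain ⟨C, hC⟩ := exists_ncard_le_newtonArea_mul_sq_add ha hb
  refine ⟨max C 1, by positivity, fun k hk => ?_⟩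
  have hlower := newtonArea_mul_sq_le_ncard ha hb hk
  have hupper := hC k hk
  have hCk : C * k ≤ max C 1 * k := by gcongr; exact le_max_left C 1
  have hCk' : 0 ≤ max C 1 * k := by positivity
  rw [finrank_quotient_monomialIdeal_pow, abs_le]
  constructor <;> linarith
end
end

section
/- Let (h, ρ, v) be a staircase datum. Then |Δ| − ρ_h·v_h ≤ Σ_{i=0}^{h−1} δᵢ·ρ̄ᵢ − ρ̄_{i₀}/2, where the sum is over all indices 0 ≤ i ≤ h−1 (indices with δᵢ = 0 contribute nothing). -/
open Pointwise MeasureTheory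

noncomputable section

/-- The set of lattice points `Γ = {(vᵢ, ρᵢ) : 0 ≤ i ≤ h}` of a staircase datum. -/
def stairPoints (h : ℕ) (ρ : ℕ → ℝ) (v : ℕ → ℕ) : Set (ℝ × ℝ) :=
  (fun i => ((v i : ℝ), ρ i)) '' Set.Iic h

/-- The Newton polygon
`Δ := (ℝ≥0² \ conv(ℝ≥0² + Γ)) ∩ ([0, v_h] × ℝ≥0)` of a staircase datum. -/
def stairDelta (h : ℕ) (ρ : ℕ → ℝ) (v : ℕ → ℕ) : Set (ℝ × ℝ) :=
  (quadrant \ closure (convexHull ℝ (quadrant + stairPoints h ρ v))) ∩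
    (Set.Icc (0 : ℝ) (v h : ℝ) ×ˢ Set.Ici (0 : ℝ))

/-!
For each `i` let `gᵢ := ρ_{τ(i)}`, where `τ(i) = columnEnd v h i` is the last index `j ≤ h`
with `vⱼ = vᵢ`. The points `(vᵢ, gᵢ)` lie in `Γ`, so `Δ` lies under the polygonal line through
them, i.e. in the union of the trapezoids over `[vᵢ, vᵢ₊₁]` with heights `gᵢ, gᵢ₊₁`. The heights
`gᵢ` decrease from `g₀ = ρ_{i₀}` to `g_h = ρ_h` and only drop where `δᵢ` is a positive integer, so
`δᵢ (gᵢ + gᵢ₊₁) / 2 ≤ δᵢ ρᵢ - (gᵢ - gᵢ₊₁) / 2`, and the drops telescope to `ρ_{i₀} - ρ_h`.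
-/

open Set

theorem volume_region_between_cc_eq_lintegral {α : Type*} [MeasurableSpace α] {μ : Measure α}
    {f g : α → ℝ} {s : Set α} (hf : Measurable f) (hg : Measurable g) (hs : MeasurableSet s) :
    μ.prod volume {p : α × ℝ | p.1 ∈ s ∧ p.2 ∈ Icc (f p.1) (g p.1)} =
      ∫⁻ x in s, ENNReal.ofReal (g x - f x) ∂μ := by
  rw [Measure.prod_apply (measurableSet_region_between_cc hf hg hs), ← lintegral_indicator hs]
  congr 1 with x
  by_cases hx : x ∈ s
  · rw [indicator_of_mem hx, ← Real.volume_Icc]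
    congr 1 with y
    simp [hx]
  · simp [hx]

-- The region under the segment from `(a, ya)` to `(b, yb)`, written without division so that for
-- `a = b` it is the null ray `{a} × [0, ∞)`.
def trapezoid (a b ya yb : ℝ) : Set (ℝ × ℝ) :=
  {p | p.1 ∈ Icc a b ∧ 0 ≤ p.2 ∧ (b - a) * p.2 ≤ (b - p.1) * ya + (p.1 - a) * yb}

theorem integral_affine_interpolation (a b ya yb : ℝ) (hab : a < b) :
    ∫ x in a..b, ((b - x) * ya + (x - a) * yb) / (b - a) = (b - a) * (ya + yb) / 2 := by
  have hII {f : ℝ → ℝ} (hf : Continuous f) : IntervalIntegrable f volume a b :=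
    hf.intervalIntegrable a b
  rw [intervalIntegral.integral_div,
    intervalIntegral.integral_add (hII (by fun_prop)) (hII (by fun_prop)),
    intervalIntegral.integral_mul_const, intervalIntegral.integral_mul_const,
    intervalIntegral.integral_sub (hII (by fun_prop)) (hII (by fun_prop)),
    intervalIntegral.integral_sub (hII (by fun_prop)) (hII (by fun_prop))]
  simp
  field_simp [sub_ne_zero.2 hab.ne']
  ring

theorem volume_trapezoid {a b ya yb : ℝ} (hab : a ≤ b) (hya : 0 ≤ ya) (hyb : 0 ≤ yb) :
    volume (trapezoid a b ya yb) = ENNReal.ofReal ((b - a) * (ya + yb) / 2) := by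
  rcases hab.eq_or_lt with rfl | hab
  · rw [sub_self, zero_mul, zero_div, ENNReal.ofReal_zero]
    refine measure_mono_null (t := {a} ×ˢ univ)
      (fun p hp => ⟨le_antisymm hp.1.2 hp.1.1, trivial⟩) ?_
    simp [Measure.volume_eq_prod]
  set ℓ : ℝ → ℝ := fun x => ((b - x) * ya + (x - a) * yb) / (b - a)
  have hℓ_nonneg : ∀ x ∈ Icc a b, 0 ≤ ℓ x := fun x hx =>
    div_nonneg (by nlinarith [hx.1, hx.2]) (sub_pos.2 hab).le
  have htrap :
      trapezoid a b ya yb = {p | p.1 ∈ Icc a b ∧ p.2 ∈ Icc ((fun _ => 0) p.1) (ℓ p.1)} := by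
    ext p
    simp only [trapezoid, ℓ, mem_ofPred_eq, mem_Icc, le_div_iff₀ (sub_pos.2 hab), mul_comm]
  have hℓ : Continuous ℓ := by fun_prop
  rw [htrap, Measure.volume_eq_prod, volume_region_between_cc_eq_lintegral measurable_const
    hℓ.measurable measurableSet_Icc, ← integral_affine_interpolation a b ya yb hab,
    intervalIntegral.integral_of_le hab.le, ← integral_Icc_eq_integral_Ioc,
    ofReal_integral_eq_lintegral_ofReal hℓ.integrableOn_Icc
      ((ae_restrict_iff' measurableSet_Icc).2 (Filter.Eventually.of_forall hℓ_nonneg))]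
  simp

theorem toReal_volume_le_sum_trapezoid {s : Set (ℝ × ℝ)} {n : ℕ} {a y : ℕ → ℝ}
    (ha : ∀ i < n, a i ≤ a (i + 1)) (hy : ∀ i ≤ n, 0 ≤ y i)
    (hs : s ⊆ ⋃ i ∈ Finset.range n, trapezoid (a i) (a (i + 1)) (y i) (y (i + 1))) :
    (volume s).toReal ≤ ∑ i ∈ Finset.range n, (a (i + 1) - a i) * (y i + y (i + 1)) / 2 := by
  have harea : ∀ i ∈ Finset.range n, 0 ≤ (a (i + 1) - a i) * (y i + y (i + 1)) / 2 := by
    intro i hi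
    have hi := Finset.mem_range.1 hi
    have := sub_nonneg.2 (ha i hi)
    have := hy i hi.le
    have := hy (i + 1) hi
    positivity
  refine ENNReal.toReal_le_of_le_ofReal (Finset.sum_nonneg harea) ?_
  calc volume s
      ≤ ∑ i ∈ Finset.range n, volume (trapezoid (a i) (a (i + 1)) (y i) (y (i + 1))) :=
        (measure_mono hs).trans (measure_biUnion_finset_le _ _)
    _ = ∑ i ∈ Finset.range n, ENNReal.ofReal ((a (i + 1) - a i) * (y i + y (i + 1)) / 2) := by
        refine Finset.sum_congr rfl fun i hi => ?_
        have hi := Finset.mem_range.1 hi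
        exact volume_trapezoid (ha i hi) (hy i hi.le) (hy (i + 1) hi)
    _ = _ := (ENNReal.ofReal_sum_of_nonneg harea).symm

theorem exists_mem_Icc_apply_succ {α : Type*} [LinearOrder α] {f : ℕ → α} {n : ℕ} (hn : 0 < n)
    {x : α} (hx₀ : f 0 ≤ x) (hxn : x ≤ f n) : ∃ k < n, x ∈ Icc (f k) (f (k + 1)) := by
  induction n, hn using Nat.le_induction with
  | base => exact ⟨0, one_pos, hx₀, hxn⟩
  | succ n hn ih =>
    by_cases hx : x ≤ f n
    · obtain ⟨k, hk, hxk⟩ := ih hx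
      exact ⟨k, hk.trans n.lt_succ_self, hxk⟩
    · exact ⟨n, n.lt_succ_self, (not_le.1 hx).le, hxn⟩

theorem mem_convexHull_quadrant_add_of_le_segment {S : Set (ℝ × ℝ)} {a b ya yb : ℝ}
    (hA : (a, ya) ∈ S) (hB : (b, yb) ∈ S) (hab : a < b) {p : ℝ × ℝ} (hp : p.1 ∈ Icc a b)
    (hle : (b - p.1) * ya + (p.1 - a) * yb ≤ (b - a) * p.2) :
    p ∈ convexHull ℝ (quadrant + S) := by
  have hba : 0 < b - a := sub_pos.2 hab
  set t := p.2 - ((b - p.1) * ya + (p.1 - a) * yb) / (b - a)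
  have ht : (0, t) ∈ quadrant := ⟨le_rfl, sub_nonneg.2 ((div_le_iff₀ hba).2 (by linarith))⟩
  refine segment_subset_convexHull (add_mem_add ht hA) (add_mem_add ht hB)
    ⟨(b - p.1) / (b - a), (p.1 - a) / (b - a), div_nonneg (by linarith [hp.2]) hba.le,
      div_nonneg (by linarith [hp.1]) hba.le, by field_simp; ring, ?_⟩
  ext <;> simp [t] <;> field_simp <;> ring

theorem stairDelta_subset_biUnion_trapezoid {h : ℕ} {ρ : ℕ → ℝ} {v : ℕ → ℕ} {y : ℕ → ℝ}
    (hh : 0 < h) (hv0 : v 0 = 0) (hy : ∀ i ≤ h, ((v i : ℝ), y i) ∈ stairPoints h ρ v) :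
    stairDelta h ρ v ⊆ ⋃ i ∈ Finset.range h, trapezoid (v i) (v (i + 1)) (y i) (y (i + 1)) := by
  rintro p ⟨⟨-, hp⟩, ⟨hx0, hxh⟩, hy0⟩
  obtain ⟨k, hk, hxk⟩ := exists_mem_Icc_apply_succ (f := fun i => (v i : ℝ)) hh
    (by simpa [hv0] using hx0) hxh
  refine mem_biUnion (Finset.mem_range.2 hk) ⟨hxk, hy0, ?_⟩
  rcases (hxk.1.trans hxk.2).eq_or_lt with hflat | hlt
  · have hx : p.1 = v k := le_antisymm (hflat ▸ hxk.2) hxk.1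
    simp [hx, ← hflat]
  · by_contra! habove
    exact hp (subset_closure (mem_convexHull_quadrant_add_of_le_segment (hy k hk.le)
      (hy (k + 1) hk) hlt hxk habove.le))

theorem monotoneOn_Iic_of_le_succ {α : Type*} [Preorder α] {f : ℕ → α} {n : ℕ}
    (hf : ∀ i < n, f i ≤ f (i + 1)) : MonotoneOn f (Iic n) := by
  intro a _ b hb hab
  induction b, hab using Nat.le_induction with
  | base => rfl
  | succ b _ ih => exact (ih (Nat.le_of_succ_le hb)).trans (hf b hb)

theorem antitoneOn_Iic_of_succ_le {α : Type*} [Preorder α] {f : ℕ → α} {n : ℕ}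
    (hf : ∀ i < n, f (i + 1) ≤ f i) : AntitoneOn f (Iic n) :=
  @monotoneOn_Iic_of_le_succ αᵒᵈ _ f n hf

def columnEnd (v : ℕ → ℕ) (h i : ℕ) : ℕ := Nat.findGreatest (fun j => v j = v i) h

section columnEnd

variable {v : ℕ → ℕ} {h i : ℕ}

theorem columnEnd_le : columnEnd v h i ≤ h := Nat.findGreatest_le h

theorem le_columnEnd (hi : i ≤ h) : i ≤ columnEnd v h i := Nat.le_findGreatest hi rfl

theorem apply_columnEnd (hi : i ≤ h) : v (columnEnd v h i) = v i :=
  Nat.findGreatest_spec (P := fun j => v j = v i) hi rfl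

theorem columnEnd_self : columnEnd v h h = h := Nat.findGreatest_eq rfl

theorem columnEnd_congr {j : ℕ} (hij : v i = v j) : columnEnd v h i = columnEnd v h j := by
  simp only [columnEnd, hij]

theorem columnEnd_eq_of_lt_apply_succ (hv : MonotoneOn v (Iic h)) {k : ℕ} (hk : k < h)
    (hki : v k = v i) (hjump : v k < v (k + 1)) : columnEnd v h i = k := by
  refine Nat.findGreatest_eq_iff.2 ⟨hk.le, fun _ => hki, fun n hkn hnh hn => ?_⟩
  have : v (k + 1) ≤ v n := hv (show k + 1 ≤ h from hk) hnh hkn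
  omega

theorem columnEnd_le_columnEnd_succ (hv : MonotoneOn v (Iic h)) (hi : i < h) :
    columnEnd v h i ≤ columnEnd v h (i + 1) := by
  rcases (hv hi.le (show i + 1 ≤ h from hi) i.le_succ).eq_or_lt with hflat | hjump
  · exact (columnEnd_congr hflat).le
  · rw [columnEnd_eq_of_lt_apply_succ hv hi rfl hjump]
    exact i.le_succ.trans (le_columnEnd hi)

end columnEnd

theorem lattice_trapezoid_area_add_half_drop_le {m k : ℕ} (hmk : m ≤ k) {y₀ y₁ r : ℝ}
    (hy : y₁ ≤ y₀) (hr : y₀ ≤ r) (hflat : k = m → y₁ = y₀) :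
    ((k : ℝ) - m) * (y₀ + y₁) / 2 + (y₀ - y₁) / 2 ≤ ((k : ℝ) - m) * r := by
  rcases hmk.eq_or_lt with rfl | hlt
  · simp [hflat rfl]
  · have hk : (m : ℝ) + 1 ≤ k := by exact_mod_cast hlt
    nlinarith

theorem sum_lattice_trapezoid_area_le {n : ℕ} {a : ℕ → ℕ} {y r : ℕ → ℝ}
    (ha : ∀ i < n, a i ≤ a (i + 1)) (hy : ∀ i < n, y (i + 1) ≤ y i) (hyr : ∀ i < n, y i ≤ r i)
    (hflat : ∀ i < n, a (i + 1) = a i → y (i + 1) = y i) :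
    ∑ i ∈ Finset.range n, ((a (i + 1) : ℝ) - a i) * (y i + y (i + 1)) / 2 ≤
      ∑ i ∈ Finset.range n, ((a (i + 1) : ℝ) - a i) * r i - (y 0 - y n) / 2 := by
  rw [← Finset.sum_range_sub' y, Finset.sum_div, ← Finset.sum_sub_distrib]
  refine Finset.sum_le_sum fun i hi => ?_
  have hi := Finset.mem_range.1 hi
  linarith [lattice_trapezoid_area_add_half_drop_le (ha i hi) (hy i hi) (hyr i hi) (hflat i hi)]

theorem stairDelta_area_le_general
    (h : ℕ) (ρ : ℕ → ℝ) (v : ℕ → ℕ)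
    (hρ : ∀ i < h, ρ (i + 1) ≤ ρ i) (hρh : 0 ≤ ρ h)
    (hv0 : v 0 = 0) (hv : ∀ i < h, v i ≤ v (i + 1))
    (i₀ : ℕ) (hi₀lt : i₀ < h) (hi₀pos : v i₀ < v (i₀ + 1))
    (hi₀min : ∀ j < i₀, v (j + 1) = v j) :
    (volume (stairDelta h ρ v)).toReal - ρ h * (v h : ℝ) ≤
      (∑ i ∈ Finset.range h, ((v (i + 1) : ℝ) - (v i : ℝ)) * (ρ i - ρ h))
        - (ρ i₀ - ρ h) / 2 := by
  have hv_mono : MonotoneOn v (Iic h) := monotoneOn_Iic_of_le_succ hv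
  have hρ_anti : AntitoneOn ρ (Iic h) := antitoneOn_Iic_of_succ_le hρ
  set g : ℕ → ℝ := fun i => ρ (columnEnd v h i)
  have hvi₀ : v i₀ = v 0 := le_antisymm
    (antitoneOn_Iic_of_succ_le (fun j hj => (hi₀min j hj).le) i₀.zero_le self_mem_Iic i₀.zero_le)
    (hv_mono h.zero_le hi₀lt.le i₀.zero_le)
  have hg0 : g 0 = ρ i₀ := by
    simp only [g, columnEnd_eq_of_lt_apply_succ hv_mono hi₀lt hvi₀ hi₀pos]
  have hgh : g h = ρ h := by simp only [g, columnEnd_self]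
  have harea := toReal_volume_le_sum_trapezoid (a := fun i => (v i : ℝ)) (y := g)
    (fun i hi => Nat.cast_le.2 (hv i hi))
    (fun i _ => hρh.trans (hρ_anti columnEnd_le self_mem_Iic columnEnd_le))
    (stairDelta_subset_biUnion_trapezoid (ρ := ρ) (Nat.zero_lt_of_lt hi₀lt) hv0
      (fun i hi => ⟨columnEnd v h i, columnEnd_le, by simp only [g, apply_columnEnd hi]⟩))
  have hsum := sum_lattice_trapezoid_area_le (y := g) (r := ρ) hv
    (fun i hi => hρ_anti columnEnd_le columnEnd_le (columnEnd_le_columnEnd_succ hv_mono hi))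
    (fun i hi => hρ_anti hi.le columnEnd_le (le_columnEnd hi.le))
    (fun i _ hflat => by simp only [g, columnEnd_congr hflat])
  have hwidth : ∑ i ∈ Finset.range h, ((v (i + 1) : ℝ) - v i) = v h := by
    simp [Finset.sum_range_sub (fun i => (v i : ℝ)), hv0]
  simp only [mul_sub, Finset.sum_sub_distrib, ← Finset.sum_mul, hwidth] at hsum ⊢
  linarith

/-- The trapezoid estimate: for a staircase datum `(h, ρ, v)`,
`|Δ| − ρ_h·v_h ≤ Σ_{i=0}^{h−1} δᵢ·ρ̄ᵢ − ρ̄_{i₀}/2`. -/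
theorem stairDelta_area_le
    (h : ℕ) (hh : 1 ≤ h) (ρ : ℕ → ℝ) (v : ℕ → ℕ)
    (hρ : ∀ i < h, ρ (i + 1) ≤ ρ i) (hρh : 0 ≤ ρ h)
    (hv0 : v 0 = 0) (hv : ∀ i < h, v i ≤ v (i + 1)) (hvh : 1 ≤ v h)
    (i₀ : ℕ) (hi₀lt : i₀ < h) (hi₀pos : v i₀ < v (i₀ + 1))
    (hi₀min : ∀ j < i₀, v (j + 1) = v j) :
    (volume (stairDelta h ρ v)).toReal - ρ h * (v h : ℝ) ≤
      (∑ i ∈ Finset.range h, ((v (i + 1) : ℝ) - (v i : ℝ)) * (ρ i - ρ h))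
        - (ρ i₀ - ρ h) / 2 :=
  stairDelta_area_le_general h ρ v hρ hρh hv0 hv i₀ hi₀lt hi₀pos hi₀min
end
end

section
/- Fix n ∈ ℕ, nonnegative rational numbers a₁,…,a_n, and an integer g ≥ 0 with 2g − 2 + Σ_{j=1}^n a_j > 0. Then there exist M and a real constant C > 0, depending only on g, n and a₁,…,a_n, such that for all integers d ≥ M, d_Y ≥ 1, g_Y ≥ 0, ℓ ≥ 1 and every subset I ⊆ {1,…,n} satisfying the inequality | (d_Y + Σ_{j∈I} a_j/2) − ((2g_Y − 2 + ℓ + Σ_{j∈I} a_j)/(2g − 2 + Σ_{j=1}^n a_j))·(d + Σ_{j=1}^n a_j/2) | ≤ ℓ/2, one of the following holds: either d_Y ≥ C·d, or d_Y = 1, g_Y = 0, ℓ = 2, Σ_{j∈I} a_j = 0, and the displayed inequality is an equality. -/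
set_option maxHeartbeats 1000000

/-- The basic inequality for a slope semistable weighted pointed curve forces every proper
subcurve `Y` either to have degree at least a fixed positive fraction of `deg X`, or to be
an exceptional line: a degree-one rational component meeting the rest in two nodes,
carrying no weighted points, for which the inequality is an equality. -/
theorem subcurve_degree_bound (n : ℕ) (a : Fin n → ℚ) (ha : ∀ j, 0 ≤ a j) (g : ℕ)
    (hw : (0 : ℝ) < 2 * (g : ℝ) - 2 + ∑ j, (a j : ℝ)) :
    ∃ (M : ℕ) (C : ℝ), 0 < C ∧
      ∀ (d dY gY ℓ : ℕ), M ≤ d → 1 ≤ dY → 1 ≤ ℓ →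
        ∀ I : Finset (Fin n),
          |((dY : ℝ) + ∑ j ∈ I, (a j : ℝ) / 2)
              - ((2 * (gY : ℝ) - 2 + (ℓ : ℝ) + ∑ j ∈ I, (a j : ℝ))
                  / (2 * (g : ℝ) - 2 + ∑ j, (a j : ℝ)))
                * ((d : ℝ) + ∑ j, (a j : ℝ) / 2)| ≤ (ℓ : ℝ) / 2 →
          (C * (d : ℝ) ≤ (dY : ℝ)) ∨
          (dY = 1 ∧ gY = 0 ∧ ℓ = 2 ∧ (∑ j ∈ I, (a j : ℝ)) = 0 ∧
            |((dY : ℝ) + ∑ j ∈ I, (a j : ℝ) / 2)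
                - ((2 * (gY : ℝ) - 2 + (ℓ : ℝ) + ∑ j ∈ I, (a j : ℝ))
                    / (2 * (g : ℝ) - 2 + ∑ j, (a j : ℝ)))
                  * ((d : ℝ) + ∑ j, (a j : ℝ) / 2)| = (ℓ : ℝ) / 2) := by
  classical
  have ha' : ∀ j, (0:ℝ) ≤ (a j : ℝ) := fun j => by exact_mod_cast ha j
  set w : ℝ := 2 * (g : ℝ) - 2 + ∑ j, (a j : ℝ) with hwdef
  set S : ℝ := ∑ j, (a j : ℝ) / 2 with hSdef
  have hS0 : 0 ≤ S := Finset.sum_nonneg fun j _ => by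
    have := ha' j; linarith
  have hS2 : (∑ j, (a j : ℝ)) = 2 * S := by
    rw [hSdef, ← Finset.sum_div]; ring
  have hs0 : ∀ I : Finset (Fin n), (0:ℝ) ≤ ∑ j ∈ I, (a j : ℝ) :=
    fun I => Finset.sum_nonneg fun j _ => ha' j
  have hs2S : ∀ I : Finset (Fin n), (∑ j ∈ I, (a j : ℝ)) ≤ 2 * S := by
    intro I
    calc ∑ j ∈ I, (a j : ℝ) ≤ ∑ j, (a j : ℝ) :=
          Finset.sum_le_sum_of_subset_of_nonneg (Finset.subset_univ I) (fun j _ _ => ha' j)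
      _ = 2 * S := hS2
  -- the minimal positive "discrepancy" ε
  set f : Finset (Fin n) → ℝ := fun I =>
    min (if 0 < ∑ j ∈ I, (a j : ℝ) then ∑ j ∈ I, (a j : ℝ) else 1)
        (if 0 < (∑ j ∈ I, (a j : ℝ)) - 1 then (∑ j ∈ I, (a j : ℝ)) - 1 else 1) with hfdef
  have hne : (Finset.univ : Finset (Finset (Fin n))).Nonempty := Finset.univ_nonempty
  set ε : ℝ := min 1 (Finset.univ.inf' hne f) with hεdef
  have hfpos : ∀ I, 0 < f I := by
    intro I
    apply lt_min <;> split_ifs with h <;> first | exact h | norm_num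
  have hεpos : 0 < ε := by
    rw [hεdef]
    exact lt_min one_pos ((Finset.lt_inf'_iff hne).mpr fun I _ => hfpos I)
  have hε1 : ε ≤ 1 := min_le_left _ _
  have hεf : ∀ I : Finset (Fin n), ε ≤ f I := fun I =>
    le_trans (min_le_right 1 _) (Finset.inf'_le f (Finset.mem_univ I))
  have hεs : ∀ I : Finset (Fin n), 0 < (∑ j ∈ I, (a j : ℝ)) → ε ≤ ∑ j ∈ I, (a j : ℝ) := by
    intro I h
    have h1 : ε ≤ min (if 0 < ∑ j ∈ I, (a j : ℝ) then ∑ j ∈ I, (a j : ℝ) else 1)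
        (if 0 < (∑ j ∈ I, (a j : ℝ)) - 1 then (∑ j ∈ I, (a j : ℝ)) - 1 else 1) := hεf I
    have h2 := h1.trans (min_le_left _ _)
    rwa [if_pos h] at h2
  have hεs1 : ∀ I : Finset (Fin n), 0 < (∑ j ∈ I, (a j : ℝ)) - 1 →
      ε ≤ (∑ j ∈ I, (a j : ℝ)) - 1 := by
    intro I h
    have h1 : ε ≤ min (if 0 < ∑ j ∈ I, (a j : ℝ) then ∑ j ∈ I, (a j : ℝ) else 1)
        (if 0 < (∑ j ∈ I, (a j : ℝ)) - 1 then (∑ j ∈ I, (a j : ℝ)) - 1 else 1) := hεf I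
    have h2 := h1.trans (min_le_right _ _)
    rwa [if_pos h] at h2
  clear_value w S f ε
  obtain ⟨M, hM⟩ := exists_nat_ge (max (3*w) (max (2*w*(S+1)/ε) (w*(2*S+3))))
  refine ⟨M, ε/(2*w), div_pos hεpos (by linarith), ?_⟩
  intro d dY gY ℓ hd hdY hℓ I habs
  have hdM : (M:ℝ) ≤ (d:ℝ) := by exact_mod_cast hd
  have hA : 3*w ≤ (d:ℝ) := le_trans (le_trans (le_max_left _ _) hM) hdM
  have hB : 2*w*(S+1)/ε ≤ (d:ℝ) :=
    le_trans (le_trans (le_trans (le_max_left _ _) (le_max_right _ _)) hM) hdM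
  have hCc : w*(2*S+3) ≤ (d:ℝ) :=
    le_trans (le_trans (le_trans (le_max_right _ _) (le_max_right _ _)) hM) hdM
  set Q : ℝ := (d:ℝ)/w with hQdef
  set P : ℝ := ((d:ℝ)+S)/w with hPdef
  clear_value Q P
  have hQ3 : 3 ≤ Q := by rw [hQdef, le_div_iff₀ hw]; linarith
  have hQP : Q ≤ P := by
    rw [hQdef, hPdef]
    exact (div_le_div_iff_of_pos_right hw).mpr (by linarith)
  have hQ2S3 : 2*S+3 ≤ Q := by rw [hQdef, le_div_iff₀ hw]; nlinarith
  have hεQ : 2*(S+1) ≤ ε*Q := by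
    have h1 : 2*w*(S+1) ≤ (d:ℝ)*ε := (div_le_iff₀ hεpos).mp hB
    rw [hQdef, ← mul_div_assoc, le_div_iff₀ hw]
    nlinarith
  have hw0 : w ≠ 0 := ne_of_gt hw
  have hCd : ε/(2*w)*(d:ℝ) = ε*Q/2 := by
    rw [hQdef, div_mul_eq_mul_div, mul_div_assoc', div_div, mul_comm (2:ℝ) w]
  set t : ℝ := 2 * (gY : ℝ) - 2 + (ℓ : ℝ) + ∑ j ∈ I, (a j : ℝ) with htdef
  clear_value t
  have habs' : |(dY:ℝ) + (∑ j ∈ I, (a j:ℝ))/2 - t*P| ≤ (ℓ:ℝ)/2 := by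
    have e : (dY:ℝ) + (∑ j ∈ I, (a j:ℝ))/2 - t*P
        = (dY:ℝ) + (∑ j ∈ I, (a j:ℝ)/2) - t/w*((d:ℝ)+S) := by
      rw [hPdef, ← Finset.sum_div]
      ring
    rw [e]; exact habs
  obtain ⟨hlo, hhi⟩ := abs_le.mp habs'
  have hdY1 : (1:ℝ) ≤ (dY:ℝ) := by exact_mod_cast hdY
  have hℓ1 : (1:ℝ) ≤ (ℓ:ℝ) := by exact_mod_cast hℓ
  have hgY0 : (0:ℝ) ≤ (gY:ℝ) := Nat.cast_nonneg _
  have hP3 : 3 ≤ P := hQ3.trans hQP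
  have hsI0 : 0 ≤ ∑ j ∈ I, (a j:ℝ) := hs0 I
  have hsIS : (∑ j ∈ I, (a j:ℝ)) ≤ 2*S := hs2S I
  rcases le_or_gt 3 ℓ with h3 | h3
  · -- many linking nodes : ℓ ≥ 3
    left
    have hℓ3 : (3:ℝ) ≤ (ℓ:ℝ) := by exact_mod_cast h3
    have ht : (ℓ:ℝ) - 2 ≤ t := by rw [htdef]; linarith
    have htP : ((ℓ:ℝ)-2)*Q ≤ t*P := by
      nlinarith [mul_nonneg (by linarith : (0:ℝ) ≤ t - ((ℓ:ℝ)-2)) (by linarith : (0:ℝ) ≤ P),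
        mul_nonneg (by linarith : (0:ℝ) ≤ (ℓ:ℝ)-2) (by linarith : (0:ℝ) ≤ P - Q)]
    rw [hCd]
    nlinarith [htP, hhi, hQ2S3, hsIS,
      mul_nonneg (by linarith : (0:ℝ) ≤ (ℓ:ℝ)-3) (by linarith : (0:ℝ) ≤ Q - 1/2),
      mul_nonneg (by linarith : (0:ℝ) ≤ 1-ε) (by linarith : (0:ℝ) ≤ Q)]
  · rcases le_or_gt t 0 with ht0 | ht0
    · -- exceptional component
      right
      have htP0 : t*P ≤ 0 := by
        nlinarith [mul_nonneg (by linarith : (0:ℝ) ≤ -t) (by linarith : (0:ℝ) ≤ P)]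
      have hℓ2r : (ℓ:ℝ) ≤ 2 := by exact_mod_cast (by omega : ℓ ≤ 2)
      have hsum0 : (∑ j ∈ I, (a j:ℝ)) = 0 := le_antisymm (by linarith) hsI0
      have hdYr : (dY:ℝ) ≤ 1 := by linarith
      have hdYle : dY ≤ 1 := by exact_mod_cast hdYr
      have hdY1' : dY = 1 := le_antisymm hdYle hdY
      have hℓ2n : (2:ℝ) ≤ (ℓ:ℝ) := by linarith
      have hℓ2' : ℓ = 2 := by
        have h2 : 2 ≤ ℓ := by exact_mod_cast hℓ2n
        omega
      have hgY' : gY = 0 := by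
        have h2r : (ℓ:ℝ) = 2 := by rw [hℓ2']; norm_num
        have hgr : (gY:ℝ) ≤ ((0:ℕ):ℝ) := by push_cast; linarith [htdef]
        have : gY ≤ 0 := by exact_mod_cast hgr
        omega
      subst hdY1' hgY' hℓ2'
      refine ⟨rfl, rfl, rfl, hsum0, ?_⟩
      have hsum0' : (∑ j ∈ I, (a j:ℝ)/2) = 0 := by
        rw [← Finset.sum_div, hsum0]; norm_num
      have ht' : t = 0 := by rw [htdef, hsum0]; push_cast; ring
      rw [ht', hsum0']
      push_cast
      norm_num
    · -- positive discrepancy: t ≥ ε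
      left
      have hℓ2r : (ℓ:ℝ) ≤ 2 := by exact_mod_cast (by omega : ℓ ≤ 2)
      have hεt : ε ≤ t := by
        rcases Nat.eq_zero_or_pos gY with hg0 | hg1
        · have hℓ12 : ℓ = 1 ∨ ℓ = 2 := by omega
          rcases hℓ12 with h1' | h2'
          · have ht' : t = (∑ j ∈ I, (a j:ℝ)) - 1 := by
              rw [htdef, hg0, h1']; push_cast; ring
            have hpos : 0 < (∑ j ∈ I, (a j:ℝ)) - 1 := by rw [ht'] at ht0; exact ht0
            rw [ht']; exact hεs1 I hpos
          · have ht' : t = ∑ j ∈ I, (a j:ℝ) := by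
              rw [htdef, hg0, h2']; push_cast; ring
            have hpos : 0 < ∑ j ∈ I, (a j:ℝ) := by rw [ht'] at ht0; exact ht0
            rw [ht']; exact hεs I hpos
        · have hg1r : (1:ℝ) ≤ (gY:ℝ) := by exact_mod_cast hg1
          calc ε ≤ 1 := hε1
            _ ≤ t := by rw [htdef]; linarith
      have hεQtP : ε*Q ≤ t*P := by
        nlinarith [mul_nonneg (by linarith : (0:ℝ) ≤ t - ε) (by linarith : (0:ℝ) ≤ P),
          mul_nonneg (le_of_lt hεpos) (by linarith : (0:ℝ) ≤ P - Q)]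
      rw [hCd]
      linarith [hhi, hεQtP, hsIS, hεQ, hℓ2r]
end

section
/- Fix n ∈ ℕ, nonnegative rational numbers a₁,…,a_n, and an integer g ≥ 0, and set w := 2g − 2 + Σ_{j=1}^n a_j; assume w > 0. Then there exists K, depending only on g, n and a₁,…,a_n, such that for every integer d ≥ K, every integer g_Y ≥ 0, every integer ℓ ≥ 1 and every subset I ⊆ {1,…,n}, if ω_Y := 2g_Y − 2 + ℓ + Σ_{j∈I} a_j > 0, then (ω_Y / w)·(d + Σ_{j=1}^n a_j/2) − Σ_{j∈I} a_j/2 − ℓ/2 > 0. -/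
/-- Positivity of the lower extreme `M_Y^−`: for `d` large (depending only on `g`, `n` and
the weights), every subcurve datum `(g_Y, ℓ, I)` with `deg_Y ω_X(a·x) > 0` satisfies
`(ω_Y/w)·(d + Σ a_j/2) − Σ_{j∈I} a_j/2 − ℓ/2 > 0`. -/
theorem lower_extreme_positive (n : ℕ) (a : Fin n → ℚ) (ha : ∀ j, 0 ≤ a j) (g : ℕ)
    (hw : (0 : ℝ) < 2 * (g : ℝ) - 2 + ∑ j, (a j : ℝ)) :
    ∃ K : ℕ, ∀ (d gY ℓ : ℕ), K ≤ d → 1 ≤ ℓ →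
      ∀ I : Finset (Fin n),
        (0 : ℝ) < 2 * (gY : ℝ) - 2 + (ℓ : ℝ) + ∑ j ∈ I, (a j : ℝ) →
        0 < ((2 * (gY : ℝ) - 2 + (ℓ : ℝ) + ∑ j ∈ I, (a j : ℝ))
              / (2 * (g : ℝ) - 2 + ∑ j, (a j : ℝ)))
            * ((d : ℝ) + ∑ j, (a j : ℝ) / 2)
          - (∑ j ∈ I, (a j : ℝ) / 2) - (ℓ : ℝ) / 2 := by
  classical
  set w : ℝ := 2 * (g : ℝ) - 2 + ∑ j, (a j : ℝ) with hw_def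
  set A : ℝ := ∑ j, (a j : ℝ) with hA_def
  have hA0 : 0 ≤ A := Finset.sum_nonneg fun j _ => by exact_mod_cast ha j
  -- the sum over a subset
  set S : Finset (Fin n) → ℝ := fun I => ∑ j ∈ I, (a j : ℝ) with hS_def
  have hSA : ∀ I : Finset (Fin n), S I ≤ A := by
    intro I
    exact Finset.sum_le_sum_of_subset_of_nonneg (Finset.subset_univ I)
      (fun j _ _ => by exact_mod_cast ha j)
  have hS0 : ∀ I : Finset (Fin n), 0 ≤ S I :=
    fun I => Finset.sum_nonneg fun j _ => by exact_mod_cast ha j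
  -- ε : a uniform positive lower bound for the positive values of m + S I, m ∈ ℤ
  set εI : Finset (Fin n) → ℝ := fun I => (⌊-S I⌋ : ℝ) + 1 + S I with hεI_def
  have hεIpos : ∀ I, 0 < εI I := by
    intro I
    have := Int.lt_floor_add_one (-S I)
    simp only [hεI_def]
    linarith
  have hne : (Finset.univ : Finset (Finset (Fin n))).Nonempty := ⟨∅, Finset.mem_univ _⟩
  set ε : ℝ := Finset.inf' Finset.univ hne εI with hε_def
  have hεpos : 0 < ε := by
    rw [hε_def, Finset.lt_inf'_iff]
    intro I _
    exact hεIpos I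
  have hεle : ∀ I, ε ≤ εI I := fun I => Finset.inf'_le _ (Finset.mem_univ I)
  -- choice of K
  refine ⟨⌈w / 2 + w * (A + 2) / (2 * ε)⌉₊ + 1, ?_⟩
  intro d gY ℓ hd hℓ I hωpos
  set ω : ℝ := 2 * (gY : ℝ) - 2 + (ℓ : ℝ) + S I with hω_def
  -- ω ≥ ε
  have hεω : ε ≤ ω := by
    have hm : (2 * (gY : ℤ) - 2 + (ℓ : ℤ) : ℝ) = 2 * (gY : ℝ) - 2 + (ℓ : ℝ) := by push_cast; ring
    have hfloor : ⌊-S I⌋ < 2 * (gY : ℤ) - 2 + (ℓ : ℤ) := by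
      rw [Int.floor_lt]
      push_cast
      linarith [hωpos]
    have h1 : (⌊-S I⌋ : ℝ) + 1 ≤ 2 * (gY : ℝ) - 2 + (ℓ : ℝ) := by
      rw [← hm]
      exact_mod_cast Int.add_one_le_iff.mpr hfloor
    calc ε ≤ εI I := hεle I
      _ ≤ ω := by simp only [hεI_def, hω_def]; linarith
  -- d is large
  have hdK : w / 2 + w * (A + 2) / (2 * ε) < (d : ℝ) := by
    have h1 : w / 2 + w * (A + 2) / (2 * ε) ≤ (⌈w / 2 + w * (A + 2) / (2 * ε)⌉₊ : ℝ) :=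
      Nat.le_ceil _
    have h2 : ((⌈w / 2 + w * (A + 2) / (2 * ε)⌉₊ + 1 : ℕ) : ℝ) ≤ (d : ℝ) := by
      exact_mod_cast hd
    push_cast at h2
    linarith
  have hkey : ε * ((d : ℝ) - w / 2) > w * (A + 2) / 2 := by
    have h := mul_lt_mul_of_pos_left hdK hεpos
    have h2 : ε * (w * (A + 2) / (2 * ε)) = w * (A + 2) / 2 := by
      field_simp
    nlinarith
  -- ℓ ≤ ω + 2
  have hℓω : (ℓ : ℝ) ≤ ω + 2 := by
    have hg : (0 : ℝ) ≤ (gY : ℝ) := Nat.cast_nonneg _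
    simp only [hω_def]
    linarith [hS0 I]
  -- main numerator inequality
  have hnum : 0 < ω * ((d : ℝ) + A / 2) - w * (S I / 2 + (ℓ : ℝ) / 2) := by
    have hωε : ε ≤ ω := hεω
    have hdw : 0 < (d : ℝ) - w / 2 := by
      have hApos : 0 < w * (A + 2) / 2 := by positivity
      nlinarith
    nlinarith [hSA I, mul_le_mul_of_nonneg_right hωε (le_of_lt hdw), hS0 I,
      mul_le_mul_of_nonneg_left hℓω (le_of_lt hw)]
  have heq : ω / w * ((d : ℝ) + A / 2)
      - (S I / 2) - (ℓ : ℝ) / 2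
      = (ω * ((d : ℝ) + A / 2) - w * (S I / 2 + (ℓ : ℝ) / 2)) / w := by
    field_simp
    ring
  have hgoal : 0 < ω / w * ((d : ℝ) + A / 2) - (S I / 2) - (ℓ : ℝ) / 2 := by
    rw [heq]
    exact div_pos hnum hw
  have hsum2 : ∑ j, (a j : ℝ) / 2 = A / 2 := by
    rw [hA_def, Finset.sum_div]
  have hsumI2 : ∑ j ∈ I, (a j : ℝ) / 2 = S I / 2 := by
    rw [hS_def]; simp [Finset.sum_div]
  rw [hsum2, hsumI2]
  exact hgoal
end

section
/- Let A be a commutative local ring with maximal ideal m, let M be an A-module, let t₀, t₁, …, t_r ∈ M, and let u ∈ M with u = Σ_{j=0}^r c_j·t_j for some c₀, c₁, …, c_r ∈ A. Let c ∈ A be any element with c − c₀ ∈ m. If t₀ does not lie in the A-submodule spanned by {t₁, …, t_r}, then the A-submodule spanned by {u − c·t₀, t₁, …, t_r} is strictly contained in the A-submodule spanned by {t₀, t₁, …, t_r}. -/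
/-- The key replacement step in the construction of a staircase one-parameter subgroup:
over a commutative local ring `A`, if `u = Σ_j c_j • t_j`, `c ≡ c₀ (mod m)`, and `t₀` is
not in the span of `t₁, …, t_r`, then the span of `{u − c•t₀, t₁, …, t_r}` is strictly
contained in the span of `{t₀, t₁, …, t_r}`. -/
theorem span_replacement_lt {A : Type*} [CommRing A] [IsLocalRing A]
    {M : Type*} [AddCommGroup M] [Module A M]
    (r : ℕ) (t : Fin (r + 1) → M) (u : M) (c : Fin (r + 1) → A)
    (hu : u = ∑ j, c j • t j) (cc : A)
    (hcc : cc - c 0 ∈ IsLocalRing.maximalIdeal A)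
    (ht : t 0 ∉ Submodule.span A (Set.range fun j : Fin r => t j.succ)) :
    Submodule.span A (insert (u - cc • t 0) (Set.range fun j : Fin r => t j.succ)) <
      Submodule.span A (Set.range t) := by
  set S := Submodule.span A (Set.range fun j : Fin r => t j.succ) with hS
  have hsum : ∑ j : Fin r, c j.succ • t j.succ ∈ S :=
    Submodule.sum_mem _ fun j _ => Submodule.smul_mem _ _ (Submodule.subset_span ⟨j, rfl⟩)
  have hdecomp : u - cc • t 0 = (c 0 - cc) • t 0 + ∑ j : Fin r, c j.succ • t j.succ := by
    rw [hu, Fin.sum_univ_succ, sub_smul]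
    abel
  constructor
  · apply Submodule.span_le.2
    intro x hx
    rcases hx with hx | ⟨j, rfl⟩
    · subst hx
      refine sub_mem ?_ (Submodule.smul_mem _ _ (Submodule.subset_span ⟨0, rfl⟩))
      rw [hu]
      exact Submodule.sum_mem _ fun j _ =>
        Submodule.smul_mem _ _ (Submodule.subset_span ⟨j, rfl⟩)
    · exact Submodule.subset_span ⟨j.succ, rfl⟩
  · intro hle
    have h0 : t 0 ∈ Submodule.span A (insert (u - cc • t 0)
        (Set.range fun j : Fin r => t j.succ)) :=
      hle (Submodule.subset_span ⟨0, rfl⟩)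
    rw [Submodule.mem_span_insert] at h0
    obtain ⟨a, z, hz, hz'⟩ := h0
    apply ht
    have key : (1 - a * (c 0 - cc)) • t 0 ∈ S := by
      have : (1 - a * (c 0 - cc)) • t 0 =
          a • (∑ j : Fin r, c j.succ • t j.succ) + z := by
        rw [sub_smul, one_smul, mul_smul]
        nth_rewrite 1 [hz', hdecomp]
        rw [smul_add]
        abel
      rw [this]
      exact add_mem (Submodule.smul_mem _ _ hsum) hz
    have hunit : IsUnit (1 - a * (c 0 - cc)) := by
      have hm : a * (c 0 - cc) ∈ IsLocalRing.maximalIdeal A := by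
        have : c 0 - cc ∈ IsLocalRing.maximalIdeal A := by
          have := neg_mem hcc
          simpa using this
        exact Ideal.mul_mem_left _ _ this
      exact IsLocalRing.isUnit_one_sub_self_of_mem_nonunits _ hm
    obtain ⟨v, hv⟩ := hunit
    have : t 0 = (↑v⁻¹ : A) • ((1 - a * (c 0 - cc)) • t 0) := by
      rw [← hv, smul_smul, Units.inv_mul, one_smul]
    rw [this]
    exact Submodule.smul_mem _ _ key
end
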